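/- Let ε > 0 and let ξ_ε = (w_1,…,w_N) ∈ Ξ with X_1 = {i : w_i = 0}, X_3 = {i : w_i = 1/n}, X_2 = {i : 0 < w_i < 1/n}. Assume that either (b) X_2 = ∅ and max_{i ∈ X_3} F_Φ(ξ_ε; i) ≤ min_{i ∈ X_1} F_Φ(ξ_ε; i) + ε, or (c) X_2 ≠ ∅ and there is a real number s such that s − ε/2 < F_Φ(ξ_ε; i) < s + ε/2 for every i ∈ X_2, max_{i ∈ X_3} F_Φ(ξ_ε; i) ≤ s + ε/2, and s − ε/2 ≤ min_{i ∈ X_1} F_Φ(ξ_ε; i). Then ξ_ε is an ε-approximation of a Φ-optimal design, i.e., Φ(ξ_ε) ≤ Φ(ξ) + ε for every ξ ∈ Ξ. -/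

import Mathlib

/-!
By convexity the directional derivative `F ξε ξ` is at most `Φ ξ - Φ ξε`, so it suffices to show
`F ξε ξ ≥ -ε`. Linear differentiability and `F ξε ξε = 0` give `F ξε ξ = ∑ i, (ξ i - ξε i) f i`
with `f i = F ξε eᵢ`. Both (b) and (c) yield a level `s` with `f i ≥ s - ε/2` wherever `ξε i < 1/n`
(the mass may grow there) and `f i ≤ s + ε/2` wherever `ξε i > 0` (the mass may shrink there).
Hence every term of `∑ i, (ξ i - ξε i) (f i - s)` is at least `-ε/2 · |ξ i - ξε i|`, and the total
variation `∑ i, |ξ i - ξε i|` of two probability vectors is at most `2`.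
-/

open Filter Topology Finset

theorem ConvexOn.le_sub_of_tendsto_slope {E : Type*} [AddCommGroup E] [Module ℝ E]
    {s : Set E} {Φ : E → ℝ} (hΦ : ConvexOn ℝ s Φ) {x y : E} (hx : x ∈ s) (hy : y ∈ s) {d : ℝ}
    (hd : Tendsto (fun α : ℝ => (Φ ((1 - α) • x + α • y) - Φ x) / α) (𝓝[>] 0) (𝓝 d)) :
    d ≤ Φ y - Φ x := by
  refine le_of_tendsto hd ?_
  filter_upwards [Ioo_mem_nhdsGT zero_lt_one] with α ⟨hα0, hα1⟩
  have hchord : Φ ((1 - α) • x + α • y) ≤ (1 - α) * Φ x + α * Φ y :=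
    hΦ.2 hx hy (by linarith) hα0.le (by ring)
  rw [div_le_iff₀ hα0]
  linarith

theorem eq_zero_of_tendsto_slope_self {E : Type*} [AddCommGroup E] [Module ℝ E]
    (Φ : E → ℝ) (x : E) {d : ℝ}
    (hd : Tendsto (fun α : ℝ => (Φ ((1 - α) • x + α • x) - Φ x) / α) (𝓝[>] 0) (𝓝 d)) :
    d = 0 := by
  have hzero : (fun α : ℝ => (Φ ((1 - α) • x + α • x) - Φ x) / α) = fun _ => 0 := by
    funext α
    rw [← add_smul, sub_add_cancel, one_smul, sub_self, zero_div]
  rw [hzero] at hd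
  exact tendsto_nhds_unique hd tendsto_const_nhds

theorem neg_mul_abs_le_mul {a b δ : ℝ} (hpos : 0 < a → -δ ≤ b) (hneg : a < 0 → b ≤ δ) :
    -(δ * |a|) ≤ a * b := by
  rcases lt_trichotomy a 0 with ha | rfl | ha
  · rw [abs_of_neg ha]
    nlinarith [hneg ha]
  · simp
  · rw [abs_of_pos ha]
    nlinarith [hpos ha]

theorem sum_abs_sub_le_two {ι : Type*} [Fintype ι] {v w : ι → ℝ}
    (hv : ∀ i, 0 ≤ v i) (hw : ∀ i, 0 ≤ w i) (hv1 : ∑ i, v i = 1) (hw1 : ∑ i, w i = 1) :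
    ∑ i, |v i - w i| ≤ 2 :=
  calc ∑ i, |v i - w i| ≤ ∑ i, (v i + w i) := by
        gcongr with i
        rw [abs_le]
        constructor <;> linarith [hv i, hw i]
    _ = 2 := by rw [sum_add_distrib, hv1, hw1]; norm_num

theorem neg_two_mul_le_sum_sub_mul {ι : Type*} [Fintype ι] {v w f : ι → ℝ} {c s δ : ℝ}
    (hδ : 0 ≤ δ) (hv : ∀ i, 0 ≤ v i) (hvc : ∀ i, v i ≤ c) (hw : ∀ i, 0 ≤ w i)
    (hv1 : ∑ i, v i = 1) (hw1 : ∑ i, w i = 1)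
    (hlow : ∀ i, w i < c → s - δ ≤ f i) (hup : ∀ i, 0 < w i → f i ≤ s + δ) :
    -(2 * δ) ≤ ∑ i, (v i - w i) * f i := by
  have hrecenter : ∑ i, (v i - w i) * f i = ∑ i, (v i - w i) * (f i - s) := by
    have hmass : ∑ i, (v i - w i) * s = 0 := by
      rw [← sum_mul, sum_sub_distrib, hv1, hw1, sub_self, zero_mul]
    simp only [mul_sub, sum_sub_distrib, hmass, sub_zero]
  have hterm : ∀ i, -(δ * |v i - w i|) ≤ (v i - w i) * (f i - s) := fun i =>
    neg_mul_abs_le_mul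
      (fun h => by linarith [hlow i (by linarith [hvc i])])
      (fun h => by linarith [hup i (by linarith [hv i])])
  calc -(2 * δ) ≤ -(δ * ∑ i, |v i - w i|) := by
        nlinarith [sum_abs_sub_le_two hv hw hv1 hw1]
    _ = ∑ i, -(δ * |v i - w i|) := by rw [mul_sum, sum_neg_distrib]
    _ ≤ ∑ i, (v i - w i) * f i := by
        rw [hrecenter]
        exact sum_le_sum fun i _ => hterm i

theorem Finset.Nonempty.exists_sub_le_and_le_add {ι : Type*} {A B : Finset ι} (hA : A.Nonempty)
    {f : ι → ℝ} {δ : ℝ} (h : ∀ a ∈ A, ∀ b ∈ B, f a ≤ f b + 2 * δ) :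
    ∃ s, (∀ a ∈ A, f a ≤ s + δ) ∧ ∀ b ∈ B, s - δ ≤ f b :=
  ⟨A.sup' hA f - δ, fun a ha => by linarith [le_sup' f ha],
    fun b hb => by linarith [sup'_le hA f fun a ha => h a ha b hb]⟩

theorem exists_level_of_optimality_cond {ι : Type*} [Fintype ι] {w f : ι → ℝ} {c ε : ℝ}
    (hw : ∀ i, 0 ≤ w i) (hwc : ∀ i, w i ≤ c) (hw1 : ∑ i, w i = 1)
    (hcond :
      ({i | 0 < w i ∧ w i < c} = ∅ ∧ ∀ u ∈ {i | w i = c}, ∀ l ∈ {i | w i = 0},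
        f u ≤ f l + ε) ∨
      ({i | 0 < w i ∧ w i < c}.Nonempty ∧ ∃ s : ℝ,
        (∀ i ∈ {i | 0 < w i ∧ w i < c}, s - ε / 2 < f i ∧ f i < s + ε / 2) ∧
        (∀ u ∈ {i | w i = c}, f u ≤ s + ε / 2) ∧
        (∀ l ∈ {i | w i = 0}, s - ε / 2 ≤ f l))) :
    ∃ s, (∀ i, w i < c → s - ε / 2 ≤ f i) ∧ ∀ i, 0 < w i → f i ≤ s + ε / 2 := by
  rcases hcond with ⟨hX2, hb⟩ | ⟨-, s, hX2, hX3, hX1⟩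
  · have hdich : ∀ i, w i = 0 ∨ w i = c := fun i => by
      by_contra! hne
      have hi : i ∈ {i | 0 < w i ∧ w i < c} :=
        ⟨(hw i).lt_of_ne hne.1.symm, (hwc i).lt_of_ne hne.2⟩
      simp [hX2] at hi
    obtain ⟨u, hu⟩ : ∃ u, w u = c := by
      by_contra! hne
      have hzero : ∀ i, w i = 0 := fun i => (hdich i).resolve_right (hne i)
      simp [hzero] at hw1
    have hX3 : (univ.filter fun i => w i = c).Nonempty := ⟨u, by simpa using hu⟩
    obtain ⟨s, hup, hlow⟩ := hX3.exists_sub_le_and_le_add 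
      (B := univ.filter fun i => w i = 0) (f := f) (δ := ε / 2) fun a ha b hb' => by
        rw [mul_div_cancel₀ ε two_ne_zero]
        exact hb a (by simpa using ha) b (by simpa using hb')
    refine ⟨s, fun i hi => hlow i ?_, fun i hi => hup i ?_⟩
    · simpa using (hdich i).resolve_right hi.ne
    · simpa using (hdich i).resolve_left hi.ne'
  · refine ⟨s, fun i hi => ?_, fun i hi => ?_⟩
    · rcases (hw i).eq_or_lt with h0 | hpos
      · exact hX1 i h0.symm
      · exact (hX2 i ⟨hpos, hi⟩).1.le
    · rcases (hwc i).lt_or_eq with hlt | hc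
      · exact (hX2 i ⟨hi, hlt⟩).2.le
      · exact hX3 i hc

theorem stmt_15_general
    (N : ℕ)
    (Δ : Set (Fin N → ℝ))
    (hΔ : Δ = {w : Fin N → ℝ | (∀ i, 0 ≤ w i) ∧ ∑ i, w i = 1})
    (Φ : (Fin N → ℝ) → ℝ)
    (hconv : ConvexOn ℝ Δ Φ)
    (F : (Fin N → ℝ) → (Fin N → ℝ) → ℝ)
    (hF : ∀ ξ ∈ Δ, ∀ η ∈ Δ,
      Filter.Tendsto (fun α : ℝ => (Φ ((1 - α) • ξ + α • η) - Φ ξ) / α)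
        (nhdsWithin 0 (Set.Ioi 0)) (nhds (F ξ η)))
    (hlin : ∀ ξ ∈ Δ, ∀ η ∈ Δ, F ξ η = ∑ i, η i * F ξ (Pi.single i 1))
    (n : ℕ)
    (Ξ : Set (Fin N → ℝ))
    (hΞ : Ξ = {w : Fin N → ℝ | w ∈ Δ ∧ ∀ i, w i ≤ 1 / (n : ℝ)})
    (ε : ℝ) (hε : 0 < ε)
    (ξε : Fin N → ℝ) (hmem : ξε ∈ Ξ)
    (X1 X2 X3 : Set (Fin N))
    (hX1 : X1 = {i | ξε i = 0})
    (hX2 : X2 = {i | 0 < ξε i ∧ ξε i < 1 / (n : ℝ)})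
    (hX3 : X3 = {i | ξε i = 1 / (n : ℝ)})
    (hcond :
      (X2 = ∅ ∧ ∀ u ∈ X3, ∀ l ∈ X1,
        F ξε (Pi.single u 1) ≤ F ξε (Pi.single l 1) + ε) ∨
      (X2.Nonempty ∧ ∃ s : ℝ,
        (∀ i ∈ X2, s - ε / 2 < F ξε (Pi.single i 1) ∧
          F ξε (Pi.single i 1) < s + ε / 2) ∧
        (∀ u ∈ X3, F ξε (Pi.single u 1) ≤ s + ε / 2) ∧
        (∀ l ∈ X1, s - ε / 2 ≤ F ξε (Pi.single l 1)))) :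
    ∀ ξ ∈ Ξ, Φ ξε ≤ Φ ξ + ε := by
  subst hΞ hX1 hX2 hX3
  rintro ξ ⟨hξΔ, hξle⟩
  obtain ⟨hξεΔ, hξεle⟩ := hmem
  have hslope : F ξε ξ ≤ Φ ξ - Φ ξε := hconv.le_sub_of_tendsto_slope hξεΔ hξΔ (hF ξε hξεΔ ξ hξΔ)
  have hself : F ξε ξε = 0 := eq_zero_of_tendsto_slope_self Φ ξε (hF ξε hξεΔ ξε hξεΔ)
  have hexpand : F ξε ξ = ∑ i, (ξ i - ξε i) * F ξε (Pi.single i 1) := by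
    simp only [sub_mul, sum_sub_distrib, ← hlin ξε hξεΔ ξ hξΔ, ← hlin ξε hξεΔ ξε hξεΔ, hself,
      sub_zero]
  subst hΔ
  obtain ⟨s, hlow, hup⟩ := exists_level_of_optimality_cond hξεΔ.1 hξεle hξεΔ.2 hcond
  have hbound := neg_two_mul_le_sum_sub_mul (half_pos hε).le hξΔ.1 hξle hξεΔ.1 hξΔ.2 hξεΔ.2
    hlow hup
  linarith

theorem stmt_15
    (N : ℕ) (hN : 1 ≤ N)
    (Δ : Set (Fin N → ℝ))
    (hΔ : Δ = {w : Fin N → ℝ | (∀ i, 0 ≤ w i) ∧ ∑ i, w i = 1})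
    (Φ : (Fin N → ℝ) → ℝ)
    (hconv : ConvexOn ℝ Δ Φ)
    (F : (Fin N → ℝ) → (Fin N → ℝ) → ℝ)
    (hF : ∀ ξ ∈ Δ, ∀ η ∈ Δ,
      Filter.Tendsto (fun α : ℝ => (Φ ((1 - α) • ξ + α • η) - Φ ξ) / α)
        (nhdsWithin 0 (Set.Ioi 0)) (nhds (F ξ η)))
    (hlin : ∀ ξ ∈ Δ, ∀ η ∈ Δ, F ξ η = ∑ i, η i * F ξ (Pi.single i 1))
    (n : ℕ) (hn1 : 1 ≤ n) (hnN : n ≤ N)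
    (Ξ : Set (Fin N → ℝ))
    (hΞ : Ξ = {w : Fin N → ℝ | w ∈ Δ ∧ ∀ i, w i ≤ 1 / (n : ℝ)})
    (ε : ℝ) (hε : 0 < ε)
    (ξε : Fin N → ℝ) (hmem : ξε ∈ Ξ)
    (X1 X2 X3 : Set (Fin N))
    (hX1 : X1 = {i | ξε i = 0})
    (hX2 : X2 = {i | 0 < ξε i ∧ ξε i < 1 / (n : ℝ)})
    (hX3 : X3 = {i | ξε i = 1 / (n : ℝ)})
    (hcond :
      (X2 = ∅ ∧ ∀ u ∈ X3, ∀ l ∈ X1,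
        F ξε (Pi.single u 1) ≤ F ξε (Pi.single l 1) + ε) ∨
      (X2.Nonempty ∧ ∃ s : ℝ,
        (∀ i ∈ X2, s - ε / 2 < F ξε (Pi.single i 1) ∧
          F ξε (Pi.single i 1) < s + ε / 2) ∧
        (∀ u ∈ X3, F ξε (Pi.single u 1) ≤ s + ε / 2) ∧
        (∀ l ∈ X1, s - ε / 2 ≤ F ξε (Pi.single l 1)))) :
    ∀ ξ ∈ Ξ, Φ ξε ≤ Φ ξ + ε :=
  stmt_15_general N Δ hΔ Φ hconv F hF hlin n Ξ hΞ ε hε ξε hmem X1 X2 X3 hX1 hX2 hX3 hcond
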